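/- arXiv:1512.08265 — 2 statements merged into one kernel-verified Lean document; each statement's English description precedes it below -/
import Mathlib

section
/- Let n ∈ ℕ, a, μ ∈ ℝ, ρ ∈ ℝ nonzero, H an n×n real symmetric matrix, and x ∈ ℝⁿ. Form the symmetric matrix Ĥ of size n+1 with block structure [[H, x],[xᵀ, a]] (a new index v joined to the H-block via x). If μ is an eigenvalue of L_H^ρ + D(x) of multiplicity 1 with eigenvector α satisfying xᵀα ≠ 0, then μ is not an eigenvalue of L_{Ĥ}^ρ. -/
open Matrix

noncomputable def mult {ι : Type*} [Fintype ι] [DecidableEq ι]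
    (M : Matrix ι ι ℝ) (μ : ℝ) : ℕ :=
  Module.finrank ℝ (Module.End.eigenspace (Matrix.toLin' M) μ)

noncomputable def rsd {ι : Type*} [Fintype ι] [DecidableEq ι]
    (M : Matrix ι ι ℝ) : Matrix ι ι ℝ :=
  Matrix.diagonal (fun i => ∑ j, M i j)

/-- The generalized Laplacian `L_A^ρ = D(A) - ρ A`. -/
noncomputable def genLap {ι : Type*} [Fintype ι] [DecidableEq ι]
    (ρ : ℝ) (M : Matrix ι ι ℝ) : Matrix ι ι ℝ :=
  rsd M - ρ • M

/-- The bordered matrix `Ĥ = [[H, x], [xᵀ, a]]`, a new index joined via `x`. -/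
noncomputable def bordered {n : ℕ} (H : Matrix (Fin n) (Fin n) ℝ) (x : Fin n → ℝ)
    (a : ℝ) : Matrix (Fin n ⊕ Unit) (Fin n ⊕ Unit) ℝ :=
  Matrix.of fun p q =>
    match p, q with
    | Sum.inl i, Sum.inl j => H i j
    | Sum.inl i, Sum.inr _ => x i
    | Sum.inr _, Sum.inl j => x j
    | Sum.inr _, Sum.inr _ => a

theorem stmt18 {n : ℕ} (a μ ρ : ℝ) (hρ : ρ ≠ 0)
    (H : Matrix (Fin n) (Fin n) ℝ) (hH : H.IsSymm) (x : Fin n → ℝ)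
    (hmult : mult (genLap ρ H + Matrix.diagonal x) μ = 1)
    (α : Fin n → ℝ) (hα0 : α ≠ 0)
    (hα : (genLap ρ H + Matrix.diagonal x).mulVec α = μ • α)
    (hxα : ∑ i, x i * α i ≠ 0) :
    ¬ ∃ w : Fin n ⊕ Unit → ℝ, w ≠ 0 ∧
      (genLap ρ (bordered H x a)).mulVec w = μ • w := by

  rintro ⟨w, hw0, hw⟩
  set u : Fin n → ℝ := fun i => w (Sum.inl i) with hu
  set t : ℝ := w (Sum.inr ()) with htdef
  set M : Matrix (Fin n) (Fin n) ℝ := genLap ρ H + Matrix.diagonal x with hMdef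
  have hMsymm : Mᵀ = M := by
    simp [hMdef, genLap, rsd, Matrix.transpose_add, Matrix.transpose_sub,
      Matrix.transpose_smul, Matrix.diagonal_transpose, hH.eq]
  -- componentwise equations from hw
  have hw' : ∀ p, (∑ q, bordered H x a p q) * w p
      - ρ * (∑ q, bordered H x a p q * w q) = μ * w p := by
    intro p
    have h := congrFun hw p
    simp only [genLap, Matrix.sub_mulVec, Matrix.smul_mulVec, Pi.sub_apply,
      Pi.smul_apply, smul_eq_mul] at h
    simp only [rsd, Matrix.mulVec_diagonal] at h
    simpa [Matrix.mulVec, dotProduct] using h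
  have e1 : ∀ i, ((∑ j, H i j) + x i) * u i
      - ρ * ((∑ j, H i j * u j) + x i * t) = μ * u i := by
    intro i
    have h := hw' (Sum.inl i)
    simpa [bordered, Fintype.sum_sum_type] using h
  have e2 : ((∑ j, x j) + a) * t - ρ * ((∑ j, x j * u j) + a * t) = μ * t := by
    have h := hw' (Sum.inr ())
    simpa [bordered, Fintype.sum_sum_type] using h
  -- M.mulVec u in terms of sums
  have hMmul : ∀ v : Fin n → ℝ, ∀ i, M.mulVec v i =
      (∑ j, H i j) * v i - ρ * ∑ j, H i j * v j + x i * v i := by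
    intro v i
    simp only [hMdef, genLap, Matrix.add_mulVec, Matrix.sub_mulVec,
      Matrix.smul_mulVec, Pi.add_apply, Pi.sub_apply, Pi.smul_apply, smul_eq_mul]
    simp only [rsd, Matrix.mulVec_diagonal]
    simp [Matrix.mulVec, dotProduct]
  have hMu : ∀ i, M.mulVec u i = μ * u i + ρ * (x i * t) := by
    intro i
    have h := e1 i
    rw [hMmul]
    ring_nf
    ring_nf at h
    linarith
  -- symmetry of bilinear form
  have hsym : ∀ v w : Fin n → ℝ, v ⬝ᵥ M.mulVec w = w ⬝ᵥ M.mulVec v := by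
    intro v w
    rw [Matrix.dotProduct_mulVec, ← Matrix.mulVec_transpose, hMsymm,
      dotProduct_comm]
  have hket : ρ * t * (∑ i, x i * α i) = 0 := by
    have h1 : α ⬝ᵥ M.mulVec u = u ⬝ᵥ M.mulVec α := hsym α u
    rw [hα] at h1
    have h2 : α ⬝ᵥ M.mulVec u = ∑ i, α i * (μ * u i + ρ * (x i * t)) := by
      unfold dotProduct
      exact Finset.sum_congr rfl fun i _ => by rw [hMu i]
    have h3 : u ⬝ᵥ (μ • α) = μ * ∑ i, u i * α i := by
      unfold dotProduct
      rw [Finset.mul_sum]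
      exact Finset.sum_congr rfl fun i _ => by simp [Pi.smul_apply, smul_eq_mul]; ring
    rw [h2, h3] at h1
    have h4 : ∑ i, α i * (μ * u i + ρ * (x i * t))
        = μ * ∑ i, u i * α i + ρ * t * ∑ i, x i * α i := by
      rw [Finset.mul_sum, Finset.mul_sum, ← Finset.sum_add_distrib]
      exact Finset.sum_congr rfl fun i _ => by ring
    rw [h4] at h1
    linarith
  have ht0 : t = 0 := by
    rcases mul_eq_zero.mp hket with h | h
    · rcases mul_eq_zero.mp h with h' | h'
      · exact absurd h' hρ
      · exact h'
    · exact absurd h hxα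
  -- u is an eigenvector
  have huE : u ∈ Module.End.eigenspace (Matrix.toLin' M) μ := by
    rw [Module.End.mem_eigenspace_iff, Matrix.toLin'_apply]
    funext i
    simp [hMu i, ht0]
  have hαE : α ∈ Module.End.eigenspace (Matrix.toLin' M) μ := by
    rw [Module.End.mem_eigenspace_iff, Matrix.toLin'_apply, hα]
  have hα0' : (⟨α, hαE⟩ : Module.End.eigenspace (Matrix.toLin' M) μ) ≠ 0 := by
    intro h
    exact hα0 (congrArg Subtype.val h)
  have hone : Module.finrank ℝ (Module.End.eigenspace (Matrix.toLin' M) μ) = 1 := hmult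
  obtain ⟨c, hc⟩ := (finrank_eq_one_iff_of_nonzero' _ hα0').mp hone ⟨u, huE⟩
  have hcu : ∀ i, u i = c * α i := by
    intro i
    have := congrArg Subtype.val hc
    exact (congrFun this i).symm
  -- from e2 with t = 0
  have h5 : ρ * (c * ∑ i, x i * α i) = 0 := by
    have h := e2
    rw [ht0] at h
    have hsum : (∑ j, x j * u j) = c * ∑ i, x i * α i := by
      rw [Finset.mul_sum]
      exact Finset.sum_congr rfl fun i _ => by rw [hcu i]; ring
    rw [hsum] at h
    linarith
  have hc0 : c = 0 := by
    rcases mul_eq_zero.mp h5 with h | h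
    · exact absurd h hρ
    · rcases mul_eq_zero.mp h with h' | h'
      · exact h'
      · exact absurd h' hxα
  apply hw0
  funext p
  cases p with
  | inl i => have := hcu i; simpa [hc0] using this
  | inr _ => exact ht0
end

section
/- Let n ∈ ℕ, a, μ ∈ ℝ, ρ ≠ 0, H an n×n real symmetric matrix and x ∈ ℝⁿ. Let K be the (2n+1)×(2n+1) symmetric matrix with block form [[H, x, 0],[xᵀ, a, xᵀ],[0, x, H]] (two copies of H attached to a central index v via x). If μ is an eigenvalue of L_H^ρ + D(x) of multiplicity 1 with eigenvector α satisfying xᵀα ≠ 0, then μ is an eigenvalue of L_K^ρ of multiplicity 1 and every μ-eigenvector β of L_K^ρ satisfies β(v) = 0. -/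
open Matrix

/-- The matrix `K = [[H, x, 0], [xᵀ, a, xᵀ], [0, x, H]]`: two copies of `H` attached to a
central index `v` (the `Unit` summand) via `x`. -/
noncomputable def doubled {n : ℕ} (H : Matrix (Fin n) (Fin n) ℝ) (x : Fin n → ℝ)
    (a : ℝ) : Matrix (Fin n ⊕ Unit ⊕ Fin n) (Fin n ⊕ Unit ⊕ Fin n) ℝ :=
  Matrix.of fun p q =>
    match p, q with
    | Sum.inl i, Sum.inl j => H i j
    | Sum.inl i, Sum.inr (Sum.inl _) => x i
    | Sum.inl _, Sum.inr (Sum.inr _) => 0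
    | Sum.inr (Sum.inl _), Sum.inl j => x j
    | Sum.inr (Sum.inl _), Sum.inr (Sum.inl _) => a
    | Sum.inr (Sum.inl _), Sum.inr (Sum.inr j) => x j
    | Sum.inr (Sum.inr _), Sum.inl _ => 0
    | Sum.inr (Sum.inr i), Sum.inr (Sum.inl _) => x i
    | Sum.inr (Sum.inr i), Sum.inr (Sum.inr j) => H i j

/-! Write a `μ`-eigenvector of `L_K^ρ` as `(u, c, w)` and put `M = L_H^ρ + D(x)`, which is
symmetric. The outer rows say `(M - μ) u = ρ c x = (M - μ) w`; pairing with `α` gives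
`ρ c ⟨x, α⟩ = 0`, so `c = 0`. Then `u` and `w` are `μ`-eigenvectors of `M`, hence multiples of `α`
by simplicity, and the central row `⟨x, u + w⟩ = 0` forces `w = -u`. So the eigenspace is the line
through `(α, 0, -α)`. -/

open Module.End Submodule

lemma Matrix.IsSymm.dotProduct_eq_zero_of_mulVec_sub_smul_eq {ι : Type*} [Fintype ι]
    {M : Matrix ι ι ℝ} (hM : M.IsSymm) {μ : ℝ} {α u y : ι → ℝ} (hα : M *ᵥ α = μ • α)
    (hu : M *ᵥ u - μ • u = y) : y ⬝ᵥ α = 0 := by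
  rw [← hu, sub_dotProduct, dotProduct_comm, dotProduct_mulVec, ← mulVec_transpose, hM.eq, hα,
    smul_dotProduct, smul_dotProduct, dotProduct_comm, sub_self]

section
variable {ι : Type*} [Fintype ι] [DecidableEq ι]

lemma genLap_mulVec_apply (ρ : ℝ) (M : Matrix ι ι ℝ) (v : ι → ℝ) (i : ι) :
    (genLap ρ M *ᵥ v) i = (∑ j, M i j) * v i - ρ * (M *ᵥ v) i := by
  simp [genLap, rsd, sub_mulVec, smul_mulVec, mulVec_diagonal]

lemma isSymm_genLap {M : Matrix ι ι ℝ} (hM : M.IsSymm) (ρ : ℝ) : (genLap ρ M).IsSymm :=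
  (isSymm_diagonal _).sub (hM.smul ρ)

lemma eigenspace_eq_span_of_mult_eq_one {M : Matrix ι ι ℝ} {μ : ℝ} {α : ι → ℝ}
    (hα0 : α ≠ 0) (hα : M *ᵥ α = μ • α) (h : mult M μ = 1) :
    eigenspace (toLin' M) μ = span ℝ {α} := by
  refine (eq_of_le_of_finrank_le ?_ ?_).symm
  · rwa [span_singleton_le_iff_mem, mem_eigenspace_iff, toLin'_apply]
  · rw [finrank_span_singleton hα0]
    exact h.le

lemma mult_eq_one_of_eigenspace_eq_span {M : Matrix ι ι ℝ} {μ : ℝ} {α : ι → ℝ}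
    (hα0 : α ≠ 0) (h : eigenspace (toLin' M) μ = span ℝ {α}) : mult M μ = 1 := by
  rw [mult, h, finrank_span_singleton hα0]

end

section Doubled
variable {n : ℕ}

def blockVec (u : Fin n → ℝ) (c : ℝ) (w : Fin n → ℝ) : Fin n ⊕ Unit ⊕ Fin n → ℝ :=
  Sum.elim u (Sum.elim (fun _ => c) w)

lemma blockVec_eta (β : Fin n ⊕ Unit ⊕ Fin n → ℝ) :
    blockVec (fun i => β (Sum.inl i)) (β (Sum.inr (Sum.inl ())))
      (fun i => β (Sum.inr (Sum.inr i))) = β := by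
  funext p
  rcases p with i | ⟨⟩ | i <;> rfl

lemma smul_blockVec (t : ℝ) (u : Fin n → ℝ) (c : ℝ) (w : Fin n → ℝ) :
    t • blockVec u c w = blockVec (t • u) (t * c) (t • w) := by
  funext p
  rcases p with i | ⟨⟩ | i <;> rfl

lemma blockVec_ne_zero {u : Fin n → ℝ} (hu : u ≠ 0) (c : ℝ) (w : Fin n → ℝ) :
    blockVec u c w ≠ 0 :=
  fun h => hu (funext fun i => congrFun h (Sum.inl i))

variable (a ρ : ℝ) (H : Matrix (Fin n) (Fin n) ℝ) (x u w : Fin n → ℝ) (c : ℝ)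

lemma genLap_doubled_mulVec_blockVec_inl (i : Fin n) :
    (genLap ρ (doubled H x a) *ᵥ blockVec u c w) (Sum.inl i)
      = ((genLap ρ H + diagonal x) *ᵥ u) i - ρ * c * x i := by
  rw [add_mulVec, Pi.add_apply, mulVec_diagonal, genLap_mulVec_apply, genLap_mulVec_apply]
  simp only [doubled, of_apply, Fintype.sum_sum_type, Finset.univ_unique, PUnit.default_eq_unit,
    Finset.sum_const, Finset.card_singleton, one_smul, blockVec,
    Sum.elim_inl, mulVec, dotProduct, Sum.elim_inr, zero_mul]
  ring

lemma genLap_doubled_mulVec_blockVec_inr_inr (i : Fin n) :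
    (genLap ρ (doubled H x a) *ᵥ blockVec u c w) (Sum.inr (Sum.inr i))
      = ((genLap ρ H + diagonal x) *ᵥ w) i - ρ * c * x i := by
  rw [add_mulVec, Pi.add_apply, mulVec_diagonal, genLap_mulVec_apply, genLap_mulVec_apply]
  simp only [doubled, of_apply, Fintype.sum_sum_type, Finset.sum_const_zero, Finset.univ_unique,
    PUnit.default_eq_unit, Finset.sum_const, Finset.card_singleton, one_smul, zero_add, blockVec,
    Sum.elim_inr, mulVec, dotProduct, Sum.elim_inl, zero_mul]
  ring

lemma genLap_doubled_mulVec_blockVec_center :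
    (genLap ρ (doubled H x a) *ᵥ blockVec u c w) (Sum.inr (Sum.inl ()))
      = (2 * ∑ j, x j + a - ρ * a) * c - ρ * (x ⬝ᵥ u + x ⬝ᵥ w) := by
  rw [genLap_mulVec_apply]
  simp only [doubled, of_apply, Fintype.sum_sum_type, Finset.univ_unique, PUnit.default_eq_unit,
    Finset.sum_const, Finset.card_singleton, one_smul, blockVec, Sum.elim_inr, Sum.elim_inl, mulVec,
    dotProduct]
  ring

lemma genLap_doubled_mulVec_blockVec_eq_smul_iff (μ : ℝ) :
    genLap ρ (doubled H x a) *ᵥ blockVec u c w = μ • blockVec u c w ↔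
      (genLap ρ H + diagonal x) *ᵥ u - μ • u = (ρ * c) • x ∧
      (2 * ∑ j, x j + a - ρ * a - μ) * c = ρ * (x ⬝ᵥ u + x ⬝ᵥ w) ∧
      (genLap ρ H + diagonal x) *ᵥ w - μ • w = (ρ * c) • x := by
  simp only [funext_iff, Sum.forall, Unique.forall_iff, PUnit.default_eq_unit, Pi.smul_apply,
    Pi.sub_apply, smul_eq_mul,
    genLap_doubled_mulVec_blockVec_inl, genLap_doubled_mulVec_blockVec_inr_inr,
    genLap_doubled_mulVec_blockVec_center]
  simp only [blockVec, Sum.elim_inl, Sum.elim_inr]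
  refine and_congr (forall_congr' fun i => ?_) (and_congr ?_ (forall_congr' fun i => ?_)) <;>
    constructor <;> intro h <;> linarith

variable {a ρ H x} in
lemma eigenspace_genLap_doubled {μ : ℝ} {α : Fin n → ℝ} (hρ : ρ ≠ 0)
    (hM : (genLap ρ H + diagonal x).IsSymm)
    (hspan : eigenspace (toLin' (genLap ρ H + diagonal x)) μ = span ℝ {α})
    (hxα : x ⬝ᵥ α ≠ 0) :
    eigenspace (toLin' (genLap ρ (doubled H x a))) μ = span ℝ {blockVec α 0 (-α)} := by
  have mem_span_of_eigen :
      ∀ v, (genLap ρ H + diagonal x) *ᵥ v = μ • v → ∃ t : ℝ, t • α = v := fun v hv =>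
    mem_span_singleton.mp (hspan ▸ mem_eigenspace_iff.mpr (by rwa [toLin'_apply]))
  have hα : (genLap ρ H + diagonal x) *ᵥ α = μ • α := by
    simpa only [mem_eigenspace_iff, toLin'_apply] using hspan.ge (mem_span_singleton_self α)
  apply le_antisymm
  · intro β hβ
    obtain ⟨u, c, w, rfl⟩ : ∃ u c w, blockVec u c w = β := ⟨_, _, _, blockVec_eta β⟩
    rw [mem_eigenspace_iff, toLin'_apply, genLap_doubled_mulVec_blockVec_eq_smul_iff] at hβ
    obtain ⟨hu, hcenter, hw⟩ := hβ
    have hc : c = 0 := by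
      have h := hM.dotProduct_eq_zero_of_mulVec_sub_smul_eq hα hu
      simpa [smul_dotProduct, hρ, hxα] using h
    subst hc
    obtain ⟨t, rfl⟩ := mem_span_of_eigen u (by simpa [sub_eq_zero] using hu)
    obtain ⟨s, rfl⟩ := mem_span_of_eigen w (by simpa [sub_eq_zero] using hw)
    have hs : s = -t := by
      have h : ρ * ((t + s) * (x ⬝ᵥ α)) = 0 := by
        rw [dotProduct_smul, dotProduct_smul, smul_eq_mul, smul_eq_mul] at hcenter
        linarith
      simpa [hρ, hxα, add_eq_zero_iff_eq_neg'] using h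
    subst hs
    exact mem_span_singleton.mpr ⟨t, by rw [smul_blockVec, mul_zero, smul_neg, neg_smul]⟩
  · rw [span_singleton_le_iff_mem, mem_eigenspace_iff, toLin'_apply,
      genLap_doubled_mulVec_blockVec_eq_smul_iff]
    refine ⟨?_, ?_, ?_⟩ <;> simp [hα, mulVec_neg]

end Doubled

theorem stmt19_general {n : ℕ} (a μ ρ : ℝ) (hρ : ρ ≠ 0)
    (H : Matrix (Fin n) (Fin n) ℝ) (hH : H.IsSymm) (x : Fin n → ℝ)
    (hmult : mult (genLap ρ H + Matrix.diagonal x) μ = 1)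
    (α : Fin n → ℝ)
    (hα : (genLap ρ H + Matrix.diagonal x).mulVec α = μ • α)
    (hxα : ∑ i, x i * α i ≠ 0) :
    mult (genLap ρ (doubled H x a)) μ = 1 ∧
      ∀ β : Fin n ⊕ Unit ⊕ Fin n → ℝ,
        (genLap ρ (doubled H x a)).mulVec β = μ • β → β (Sum.inr (Sum.inl ())) = 0 := by
  have hα0 : α ≠ 0 := by
    rintro rfl
    simp at hxα
  have hK := eigenspace_genLap_doubled (a := a) hρ ((isSymm_genLap hH ρ).add (isSymm_diagonal x))
    (eigenspace_eq_span_of_mult_eq_one hα0 hα hmult) hxα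
  refine ⟨mult_eq_one_of_eigenspace_eq_span (blockVec_ne_zero hα0 _ _) hK, fun β hβ => ?_⟩
  have hβ' : β ∈ span ℝ {blockVec α 0 (-α)} := by
    rwa [← hK, mem_eigenspace_iff, toLin'_apply]
  obtain ⟨t, rfl⟩ := mem_span_singleton.mp hβ'
  simp [blockVec]

theorem stmt19 {n : ℕ} (a μ ρ : ℝ) (hρ : ρ ≠ 0)
    (H : Matrix (Fin n) (Fin n) ℝ) (hH : H.IsSymm) (x : Fin n → ℝ)
    (hmult : mult (genLap ρ H + Matrix.diagonal x) μ = 1)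
    (α : Fin n → ℝ) (hα0 : α ≠ 0)
    (hα : (genLap ρ H + Matrix.diagonal x).mulVec α = μ • α)
    (hxα : ∑ i, x i * α i ≠ 0) :
    mult (genLap ρ (doubled H x a)) μ = 1 ∧
      ∀ β : Fin n ⊕ Unit ⊕ Fin n → ℝ,
        (genLap ρ (doubled H x a)).mulVec β = μ • β → β (Sum.inr (Sum.inl ())) = 0 :=
  stmt19_general a μ ρ hρ H hH x hmult α hα hxα
end
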